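/- arXiv:2210.10467 — 4 statements merged into one kernel-verified Lean document; each statement's English description precedes it below -/
import Mathlib

section
/- Let p(x) = x_1x_2x_3 + x_1x_4x_5 on C^5. A matrix M ∈ gl(5,C) satisfies ⟨Mx, ∇p(x)⟩ = 0 for all x ∈ C^5 if and only if M has the form: M_{1j} = M_{j1} = 0 for j ≠ 1; M_{23}=M_{32}=M_{45}=M_{54}=0; M_{42} = -M_{35}, M_{52} = -M_{34}, M_{43} = -M_{25}, M_{53} = -M_{24}; and the diagonal satisfies M_{11}+M_{22}+M_{33} = 0 and M_{11}+M_{44}+M_{55} = 0. -/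
/-!
`⟨Mx, ∇p(x)⟩` is a cubic form in `x` whose coefficients, after grouping its monomials, are the
linear forms in the entries of `M` listed in the theorem; over a field of characteristic zero a
cubic form vanishes identically exactly when these coefficients do.
-/

open MvPolynomial

section CommRing

variable {R : Type*} [CommRing R]

theorem eval_pderiv_x₀x₁x₂_add_x₀x₃x₄ (x : Fin 5 → R) (i : Fin 5) :
    eval x (pderiv i (X 0 * X 1 * X 2 + X 0 * X 3 * X 4 : MvPolynomial (Fin 5) R)) =
      ![x 1 * x 2 + x 3 * x 4, x 0 * x 2, x 0 * x 1, x 0 * x 4, x 0 * x 3] i := by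
  fin_cases i <;>
    simp only [map_add, map_mul, Derivation.leibniz, pderiv_X, Pi.single_apply, smul_eq_mul,
      eval_X, map_zero, map_one, Fin.reduceFinMk, Fin.isValue, Fin.reduceEq, Matrix.cons_val,
      if_true, if_false] <;>
    ring

theorem sum_mulVec_mul_eval_pderiv (M : Matrix (Fin 5) (Fin 5) R) (x : Fin 5 → R) :
    ∑ i : Fin 5, M.mulVec x i *
        eval x (pderiv i (X 0 * X 1 * X 2 + X 0 * X 3 * X 4 : MvPolynomial (Fin 5) R)) =
      x 0 ^ 2 * (M 1 0 * x 2 + M 2 0 * x 1 + M 3 0 * x 4 + M 4 0 * x 3)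
      + (x 1 * x 2 + x 3 * x 4) * (M 0 1 * x 1 + M 0 2 * x 2 + M 0 3 * x 3 + M 0 4 * x 4)
      + x 0 * (M 1 2 * x 2 ^ 2 + M 2 1 * x 1 ^ 2 + M 3 4 * x 4 ^ 2 + M 4 3 * x 3 ^ 2)
      + x 0 * x 1 * x 2 * (M 0 0 + M 1 1 + M 2 2) + x 0 * x 3 * x 4 * (M 0 0 + M 3 3 + M 4 4)
      + x 0 * x 2 * x 3 * (M 1 3 + M 4 2) + x 0 * x 2 * x 4 * (M 1 4 + M 3 2)
      + x 0 * x 1 * x 3 * (M 2 3 + M 4 1) + x 0 * x 1 * x 4 * (M 2 4 + M 3 1) := by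
  simp only [eval_pderiv_x₀x₁x₂_add_x₀x₃x₄, Fin.sum_univ_five, Matrix.mulVec, dotProduct,
    Fin.isValue, Matrix.cons_val]
  ring

/-- The linear equations cutting out `𝔤₀[p]` inside `𝔤𝔩(5)`. -/
def InvarianceEquations (M : Matrix (Fin 5) (Fin 5) R) : Prop :=
  (∀ j : Fin 5, j ≠ 0 → M 0 j = 0 ∧ M j 0 = 0) ∧
    M 1 2 = 0 ∧ M 2 1 = 0 ∧ M 3 4 = 0 ∧ M 4 3 = 0 ∧
    M 3 1 = -M 2 4 ∧ M 4 1 = -M 2 3 ∧ M 3 2 = -M 1 4 ∧ M 4 2 = -M 1 3 ∧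
    M 0 0 + M 1 1 + M 2 2 = 0 ∧ M 0 0 + M 3 3 + M 4 4 = 0

theorem InvarianceEquations.sum_mulVec_mul_eval_pderiv_eq_zero {M : Matrix (Fin 5) (Fin 5) R}
    (hM : InvarianceEquations M) (x : Fin 5 → R) :
    ∑ i : Fin 5, M.mulVec x i *
        eval x (pderiv i (X 0 * X 1 * X 2 + X 0 * X 3 * X 4 : MvPolynomial (Fin 5) R)) = 0 := by
  obtain ⟨h0, h12, h21, h34, h43, h31, h41, h32, h42, tr₁, tr₂⟩ := hM
  rw [sum_mulVec_mul_eval_pderiv]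
  simp only [h0, h12, h21, h34, h43, h31, h41, h32, h42, tr₁, tr₂, ne_eq, one_ne_zero,
    Fin.reduceEq, Fin.isValue, not_false_eq_true, add_neg_cancel, mul_zero, zero_mul, add_zero]

end CommRing

section Field

variable {K : Type*} [Field K] [CharZero K]

theorem InvarianceEquations.of_forall_sum_mulVec_mul_eval_pderiv_eq_zero
    {M : Matrix (Fin 5) (Fin 5) K}
    (h : ∀ x : Fin 5 → K, ∑ i : Fin 5, M.mulVec x i *
        eval x (pderiv i (X 0 * X 1 * X 2 + X 0 * X 3 * X 4 : MvPolynomial (Fin 5) K)) = 0) :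
    InvarianceEquations M := by
  have key (a b c d e : K) := h ![a, b, c, d, e]
  simp only [sum_mulVec_mul_eval_pderiv, Fin.isValue, Matrix.cons_val_zero, Matrix.cons_val,
    Matrix.cons_val_one] at key
  -- Each coefficient is isolated by a (first or second) finite difference of the cubic form.
  have h01 : M 0 1 = 0 := by linear_combination (key 0 1 1 0 0 - key 0 1 (-1) 0 0) / 2
  have h02 : M 0 2 = 0 := by linear_combination (key 0 1 1 0 0 + key 0 1 (-1) 0 0) / 2
  have h03 : M 0 3 = 0 := by linear_combination key 0 1 1 1 0 - key 0 1 1 0 0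
  have h04 : M 0 4 = 0 := by linear_combination key 0 1 1 0 1 - key 0 1 1 0 0
  have h10 : M 1 0 = 0 := by linear_combination (key 1 0 1 0 0 - key 1 0 (-1) 0 0) / 2
  have h20 : M 2 0 = 0 := by linear_combination (key 1 1 0 0 0 - key 1 (-1) 0 0 0) / 2
  have h30 : M 3 0 = 0 := by linear_combination (key 1 0 0 0 1 - key 1 0 0 0 (-1)) / 2
  have h40 : M 4 0 = 0 := by linear_combination (key 1 0 0 1 0 - key 1 0 0 (-1) 0) / 2
  refine ⟨fun j hj => ?_, ?_, ?_, ?_, ?_, ?_, ?_, ?_, ?_, ?_, ?_⟩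
  · fin_cases j
    exacts [absurd rfl hj, ⟨h01, h10⟩, ⟨h02, h20⟩, ⟨h03, h30⟩, ⟨h04, h40⟩]
  · linear_combination (key 1 0 1 0 0 + key 1 0 (-1) 0 0) / 2
  · linear_combination (key 1 1 0 0 0 + key 1 (-1) 0 0 0) / 2
  · linear_combination (key 1 0 0 0 1 + key 1 0 0 0 (-1)) / 2
  · linear_combination (key 1 0 0 1 0 + key 1 0 0 (-1) 0) / 2
  · linear_combination key 1 1 0 0 1 - key 1 0 0 0 1 - key 1 1 0 0 0 + key 1 0 0 0 0
  · linear_combination key 1 1 0 1 0 - key 1 0 0 1 0 - key 1 1 0 0 0 + key 1 0 0 0 0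
  · linear_combination key 1 0 1 0 1 - key 1 0 0 0 1 - key 1 0 1 0 0 + key 1 0 0 0 0
  · linear_combination key 1 0 1 1 0 - key 1 0 0 1 0 - key 1 0 1 0 0 + key 1 0 0 0 0
  · linear_combination key 1 1 1 0 0 - key 1 1 0 0 0 - key 1 0 1 0 0 + key 1 0 0 0 0 - h01 - h02
  · linear_combination key 1 0 0 1 1 - key 1 0 0 1 0 - key 1 0 0 0 1 + key 1 0 0 0 0 - h03 - h04

end Field

/-- Indices are shifted down by one: the paper's `M_{ij}` is `M (i - 1) (j - 1)`. -/
theorem stmt_1 (M : Matrix (Fin 5) (Fin 5) ℂ) :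
    (∀ x : Fin 5 → ℂ,
      ∑ i : Fin 5, M.mulVec x i *
        MvPolynomial.eval x (MvPolynomial.pderiv i
          (X 0 * X 1 * X 2 + X 0 * X 3 * X 4 : MvPolynomial (Fin 5) ℂ)) = 0)
    ↔
    ((∀ j : Fin 5, j ≠ 0 → M 0 j = 0 ∧ M j 0 = 0) ∧
     M 1 2 = 0 ∧ M 2 1 = 0 ∧ M 3 4 = 0 ∧ M 4 3 = 0 ∧
     M 3 1 = -M 2 4 ∧ M 4 1 = -M 2 3 ∧ M 3 2 = -M 1 4 ∧ M 4 2 = -M 1 3 ∧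
     M 0 0 + M 1 1 + M 2 2 = 0 ∧ M 0 0 + M 3 3 + M 4 4 = 0) :=
  ⟨InvarianceEquations.of_forall_sum_mulVec_mul_eval_pderiv_eq_zero,
    InvarianceEquations.sum_mulVec_mul_eval_pderiv_eq_zero⟩
end

section
/- Let n ≥ 3 and consider p(x) = Σ_{i=1}^n x_i x_{n+i} x_{n+i+1} on C^{2n+1} (the chain triangle arrangement). Let A(x) be the (2n+1)×(2n+1) matrix whose columns are: (x_1,...,x_n,0,...,0)ᵗ; for i = 1,...,n+1 the column with entries x_{n+i} at row n+i and, for 2 ≤ i ≤ n, entry -x_{n+i+1} at row i-1 and x_{n+i-1} at row i (appropriately arranged as in the chain Lie algebra action); and for i = 1,...,n-1 the column with -x_i at rows i and i+1 (coming from off-diagonal generators). Then det A(x) = x_{n+1} x_{n+2} (x_{n+3} ⋯ x_{2n-1})^2 x_{2n} x_{2n+1} · p(x). -/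
/-!
Rows `n, …, 2n` of `A` vanish off the diagonal, so `A` is block upper triangular and
`det A = x_n ⋯ x_{2n} · det P`, where `P` is the top-left `n × n` block. The first column of `P`
is `(x_0, …, x_{n-1})` and each other column `j` is `x_{n+j-1} e_j - x_{n+j+1} e_{j-1}`.
For any matrix `D_m` with first column `c` and columns `α_j e_j - β_j e_{j-1}`, expanding along
the last row gives `det D_{m+1} = α_m det D_m + c_m β_1 ⋯ β_m`, hence
`det P = ∑ᵢ xᵢ (x_{n+2} ⋯ x_{n+i+1}) (x_{n+i} ⋯ x_{2n-2})`, which is `(x_{n+2} ⋯ x_{2n-2}) · p(x)`.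
-/

open Finset

namespace Matrix

variable {R : Type*} [CommRing R]

def borderedBidiagonal (n : ℕ) (c α β : ℕ → R) : Matrix (Fin n) (Fin n) R :=
  fun i j => if (j : ℕ) = 0 then c i else
    (if (i : ℕ) + 1 = j then -β j else 0) + (if (i : ℕ) = j then α j else 0)

variable (c α β : ℕ → R)

theorem borderedBidiagonal_submatrix_castSucc (n : ℕ) :
    (borderedBidiagonal (n + 1) c α β).submatrix Fin.castSucc Fin.castSucc =
      borderedBidiagonal n c α β :=
  rfl

theorem det_borderedBidiagonal_submatrix_castSucc_succ (n : ℕ) :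
    ((borderedBidiagonal (n + 1) c α β).submatrix Fin.castSucc Fin.succ).det =
      (-1) ^ n * ∏ j ∈ range n, β (j + 1) := by
  rw [det_of_isLowerTriangular]
  · calc _ = ∏ j : Fin n, -β (j + 1) := prod_congr rfl fun j _ => by simp [borderedBidiagonal]
      _ = _ := by rw [Fin.prod_univ_eq_prod_range (fun j => -β (j + 1)), prod_neg, card_range]
  · intro i j hij
    have hij : (i : ℕ) < j := hij
    simp [borderedBidiagonal, hij.ne, show (i : ℕ) ≠ j + 1 by omega]

theorem det_borderedBidiagonal {n : ℕ} (hn : n ≠ 0) :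
    (borderedBidiagonal n c α β).det =
      ∑ i ∈ range n, c i * (∏ j ∈ range i, β (j + 1)) * ∏ j ∈ Ico (i + 1) n, α j := by
  obtain ⟨n, rfl⟩ := Nat.exists_eq_succ_of_ne_zero hn
  induction n with
  | zero => simp [borderedBidiagonal]
  | succ n ih =>
    rw [det_succ_row _ (Fin.last _), Fintype.sum_eq_add 0 (Fin.last _) (by simp [Fin.ext_iff])]
    · simp only [Fin.succAbove_last, Fin.succAbove_zero, borderedBidiagonal_submatrix_castSucc,
        det_borderedBidiagonal_submatrix_castSucc_succ, ih n.succ_ne_zero]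
      set S := ∑ i ∈ range (n + 1), c i * (∏ j ∈ range i, β (j + 1)) *
        ∏ j ∈ Ico (i + 1) (n + 1), α j
      set B := ∏ j ∈ range (n + 1), β (j + 1)
      have hsign : (-1 : R) ^ (n + 1 + (n + 1)) = 1 := Even.neg_one_pow ⟨_, rfl⟩
      have hcorner : borderedBidiagonal (n + 2) c α β (Fin.last _) 0 = c (n + 1) := by
        simp [borderedBidiagonal]
      have hdiag : borderedBidiagonal (n + 2) c α β (Fin.last _) (Fin.last _) = α (n + 1) := by
        simp [borderedBidiagonal]
      have hsum : ∑ i ∈ range (n + 2), c i * (∏ j ∈ range i, β (j + 1)) *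
          ∏ j ∈ Ico (i + 1) (n + 2), α j = S * α (n + 1) + c (n + 1) * B := by
        rw [sum_range_succ, Ico_self, prod_empty, mul_one, sum_mul]
        refine congrArg (· + _) (sum_congr rfl fun i hi => ?_)
        rw [prod_Ico_succ_top (mem_range.mp hi)]
        ring
      rw [hsum, hcorner, hdiag, Fin.val_last, Fin.val_zero, add_zero]
      linear_combination (c (n + 1) * B + α (n + 1) * S) * hsign
    · rintro j ⟨hj0, hjl⟩
      have hj0 : (j : ℕ) ≠ 0 := Fin.val_ne_iff.mpr hj0
      have hjl : (j : ℕ) ≠ n + 1 := Fin.val_ne_iff.mpr hjl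
      simp [borderedBidiagonal, hj0, hjl.symm, show n + 1 + 1 ≠ (j : ℕ) by omega]

end Matrix

theorem Finset.prod_Ico_mul_prod_Ico_overlap {M : Type*} [CommMonoid M] (f : ℕ → M)
    {a m b : ℕ} (ham : a ≤ m + 2) (hmb : m ≤ b) (hab : a ≤ b) :
    (∏ k ∈ Ico a (m + 2), f k) * ∏ k ∈ Ico m b, f k = f m * f (m + 1) * ∏ k ∈ Ico a b, f k := by
  rcases le_total a m with ham' | hma
  · rw [prod_Ico_succ_top (by omega), prod_Ico_succ_top ham', ← prod_Ico_consecutive f ham' hmb]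
    ac_rfl
  · rw [← prod_Ico_consecutive f hma hab, ← mul_assoc, mul_comm (∏ k ∈ Ico a (m + 2), f k),
      prod_Ico_consecutive f hma ham, prod_Ico_succ_top (by omega), prod_Ico_succ_top le_rfl,
      Ico_self, prod_empty, one_mul]

theorem Fin.prod_subtype_not_val_lt {M : Type*} [CommMonoid M] (f : ℕ → M) {m k : ℕ}
    (hk : k < m) : ∏ i : {i : Fin m // ¬ i.val < k}, f i = ∏ j ∈ Ico k m, f j := by
  rw [← prod_subtype (Ici (⟨k, hk⟩ : Fin m)) (fun i => by simp [Fin.le_def]) (fun i => f i),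
    ← Fin.map_valEmbedding_Ici (a := ⟨k, hk⟩), prod_map]
  rfl

namespace ChainTriangle

variable {n : ℕ}

theorem prod_Ico_two_mul_add_one {M : Type*} [CommMonoid M] (y : ℕ → M) (hn : 3 ≤ n) :
    ∏ k ∈ Ico n (2 * n + 1), y k =
      y n * y (n + 1) * (∏ k ∈ Ico (n + 2) (2 * n - 1), y k) * y (2 * n - 1) * y (2 * n) := by
  rw [prod_eq_prod_Ico_succ_bot (by omega), prod_eq_prod_Ico_succ_bot (by omega),
    show 2 * n + 1 = 2 * n - 1 + 1 + 1 by omega, prod_Ico_succ_top (by omega),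
    prod_Ico_succ_top (by omega), show 2 * n - 1 + 1 = 2 * n by omega]
  ac_rfl

theorem prod_range_mul_prod_Ico {M : Type*} [CommMonoid M] (y : ℕ → M) (hn : 3 ≤ n) {i : ℕ}
    (hi : i < n) :
    (∏ j ∈ range i, y (n + (j + 1) + 1)) * ∏ j ∈ Ico (i + 1) n, y (n + j - 1) =
      y (n + i) * y (n + i + 1) * ∏ k ∈ Ico (n + 2) (2 * n - 1), y k := by
  have hlow : ∏ j ∈ range i, y (n + (j + 1) + 1) = ∏ k ∈ Ico (n + 2) (n + i + 2), y k := by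
    rw [prod_Ico_eq_prod_range, show n + i + 2 - (n + 2) = i by omega]
    exact prod_congr rfl fun j _ => congrArg y (by omega)
  have hhigh : ∏ j ∈ Ico (i + 1) n, y (n + j - 1) = ∏ k ∈ Ico (n + i) (2 * n - 1), y k := by
    rw [show 2 * n - 1 = n + (n - 1) by omega, show n + i = i + 1 + (n - 1) by omega,
      ← prod_Ico_add']
    exact prod_congr rfl fun j _ => congrArg y (by omega)
  rw [hlow, hhigh]
  exact prod_Ico_mul_prod_Ico_overlap y (by omega) (by omega) (by omega)

theorem det_borderedBidiagonal {R : Type*} [CommRing R] (y : ℕ → R) (hn : 3 ≤ n) :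
    (Matrix.borderedBidiagonal n y (fun j => y (n + j - 1)) (fun j => y (n + j + 1))).det =
      (∏ k ∈ Ico (n + 2) (2 * n - 1), y k) * ∑ i ∈ range n, y i * y (n + i) * y (n + i + 1) := by
  rw [Matrix.det_borderedBidiagonal _ _ _ (by omega), mul_sum]
  refine sum_congr rfl fun i hi => ?_
  rw [mul_assoc, prod_range_mul_prod_Ico y hn (mem_range.mp hi)]
  ring

end ChainTriangle

open Matrix in
/-- Chain case: the determinant of the matrix `A(x)` of the infinitesimal action of the
subalgebra `h = {M ∈ g[p] : b = c = 0}` on the chain cubic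
`p(x) = Σ_{i=1}^n x_i x_{n+i} x_{n+i+1}` (0-indexed below; columns ordered:
the `t`-column, the `a₁,…,a_{n-1}`-columns, the `t₁,…,t_{n+1}`-columns) equals
`x_{n+1} x_{n+2} (x_{n+3}⋯x_{2n-1})² x_{2n} x_{2n+1} · p(x)`. -/
theorem stmt_4 (n : ℕ) (hn : 3 ≤ n) (x : Fin (2*n+1) → ℂ)
    (A : Matrix (Fin (2*n+1)) (Fin (2*n+1)) ℂ)
    (hA : ∀ i j : Fin (2*n+1), A i j =
      if hi : i.val < n then
        if j.val = 0 then x i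
        else if hj : j.val < n then
          (if i.val + 1 = j.val then -x ⟨n + j.val + 1, by omega⟩ else 0) +
          (if i.val = j.val then x ⟨n + j.val - 1, by omega⟩ else 0)
        else if j.val = i.val + n ∨ j.val = i.val + n + 1 then -x i else 0
      else if i = j then x i else 0) :
    A.det = x ⟨n, by omega⟩ * x ⟨n+1, by omega⟩ *
      (∏ j : Fin (n-3), x ⟨n+2+j.val, by have := j.isLt; omega⟩)^2 *
      x ⟨2*n-1, by omega⟩ * x ⟨2*n, by omega⟩ *
      (∑ i : Fin n, x ⟨i.val, by have := i.isLt; omega⟩ *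
        x ⟨n + i.val, by have := i.isLt; omega⟩ *
        x ⟨n + i.val + 1, by have := i.isLt; omega⟩) := by
  set y : ℕ → ℂ := Function.extend Fin.val x 0
  have hxy : ∀ i, x i = y i := fun i => (Fin.val_injective.extend_apply x 0 i).symm
  have hblock : A.det = (toSquareBlockProp A (fun i => i.val < n)).det *
      (toSquareBlockProp A (fun i => ¬ i.val < n)).det :=
    twoBlockTriangular_det A _ fun i hi j hj => by
      rw [hA, dif_neg hi, if_neg (by rintro rfl; exact hi hj)]
  have htop : (toSquareBlockProp A (fun i => i.val < n)).det =
      (borderedBidiagonal n y (fun j => y (n + j - 1)) (fun j => y (n + j + 1))).det := by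
    rw [← det_submatrix_equiv_self (Fin.castLEquiv (by omega))]
    congr 1
    ext i j
    simp [toSquareBlockProp, toBlock, hA, borderedBidiagonal, hxy]
  have hbot : toSquareBlockProp A (fun i => ¬ i.val < n) = diagonal fun i => y i.1 := by
    ext i j
    simp [toSquareBlockProp, toBlock, hA, diagonal, i.2, hxy, Subtype.ext_iff]
  rw [hblock, htop, ChainTriangle.det_borderedBidiagonal y hn, hbot, det_diagonal,
    Fin.prod_subtype_not_val_lt y (by omega), ChainTriangle.prod_Ico_two_mul_add_one y hn]
  simp only [hxy]
  rw [Fin.prod_univ_eq_prod_range (fun j => y (n + 2 + j)),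
    Fin.sum_univ_eq_sum_range (fun i => y i * y (n + i) * y (n + i + 1)),
    show n - 3 = 2 * n - 1 - (n + 2) by omega, ← prod_Ico_eq_prod_range]
  ring
end

section
/- Let n ≥ 3 and p(x) = Σ_{i=1}^n x_i x_{n+i} x_{n+φ_n(i+1)} on C^{2n}, where φ_n(m) ∈ {1,...,n} is m modulo n (the circular triangle arrangement). For any scalars t_0, t_1,...,t_n and X_{21},...,X_{n+1,n} (indices mod n), the block matrix M = [[D_1, X],[0, D_2]] with D_1 = diag(t_0 - t_i - t_{φ_n(i+1)})_{i=1}^n, D_2 = diag(t_i)_{i=1}^n, and X = Σ_{i=1}^n X_{i+1,i}(E_{φ_n(i+1),i} - E_{i,φ_n(i+2)}) (E_{st} the n×n matrix units) satisfies ⟨Mx, ∇p(x)⟩ = t_0 · p(x) for all x ∈ C^{2n}. -/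
/-!
Write `u i = x i` and `v i = x (n + i)` for `i : Fin n`, so that `p = ∑ i, u i * v i * v (i + 1)`.
The diagonal of `M` gives `u i` the weight `t₀ - t i - t (i + 1)` and `v i` the weight `t i`, so
every monomial `u i * v i * v (i + 1)` has total weight `t₀`. The off-diagonal block contributes
`∑ i, (c (i - 1) * v (i - 1) - c i * v (i + 2)) * v i * v (i + 1)`, which vanishes because the
cyclic reindexing `i ↦ i + 1` turns `c (i - 1) * v (i - 1) * v i * v (i + 1)` into
`c i * v i * v (i + 1) * v (i + 2)`.
-/

open MvPolynomial

theorem sum_mul_eval_pderiv_X_mul_X_mul_X {R σ : Type*} [CommRing R] [Fintype σ] [DecidableEq σ]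
    (g x : σ → R) (a b c : σ) :
    ∑ j, g j * eval x (pderiv j (X a * X b * X c : MvPolynomial σ R))
      = g a * (x b * x c) + g b * (x a * x c) + g c * (x a * x b) := by
  have h : ∀ j, eval x (pderiv j (X a * X b * X c : MvPolynomial σ R))
      = (if a = j then x b * x c else 0) + (if b = j then x a * x c else 0)
        + (if c = j then x a * x b else 0) := by
    intro j
    simp only [Derivation.leibniz, pderiv_X, Pi.single_apply, smul_eq_mul, map_add, map_mul,
      eval_X, apply_ite (eval x), map_one, map_zero]
    split_ifs <;> ring
  simp only [h, mul_add, Finset.sum_add_distrib, mul_ite, mul_zero, Finset.sum_ite_eq,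
    Finset.mem_univ, if_true]

section Cyclic

variable {G R : Type*} [AddGroup G] [Fintype G] [CommRing R]

theorem sum_shift_mul_sub_eq_zero (a : G) (c v : G → R) :
    ∑ i, (c (i - a) * v (i - a) - c i * v (i + a + a)) * (v i * v (i + a)) = 0 := by
  have hshift : ∑ i, c (i - a) * v (i - a) * (v i * v (i + a))
      = ∑ i, c i * v (i + a + a) * (v i * v (i + a)) :=
    Fintype.sum_equiv (Equiv.subRight a) _ _ fun i => by
      simp only [Equiv.subRight_apply, sub_add_cancel]
      ring
  simp only [sub_mul, Finset.sum_sub_distrib, hshift, sub_self]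

theorem sum_circular_relative_invariance (a : G) (t0 : R) (t c u v : G → R) :
    ∑ i, (((t0 - t i - t (i + a)) * u i + c (i - a) * v (i - a) - c i * v (i + a + a))
          * (v i * v (i + a))
        + t i * v i * (u i * v (i + a)) + t (i + a) * v (i + a) * (u i * v i))
      = t0 * ∑ i, u i * v i * v (i + a) := by
  have hsplit : ∀ i, ((t0 - t i - t (i + a)) * u i + c (i - a) * v (i - a) - c i * v (i + a + a))
          * (v i * v (i + a))
        + t i * v i * (u i * v (i + a)) + t (i + a) * v (i + a) * (u i * v i)
      = t0 * (u i * v i * v (i + a))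
        + (c (i - a) * v (i - a) - c i * v (i + a + a)) * (v i * v (i + a)) := fun i => by ring
  rw [Finset.sum_congr rfl fun i _ => hsplit i, Finset.sum_add_distrib,
    sum_shift_mul_sub_eq_zero, add_zero, Finset.mul_sum]

end Cyclic

theorem Nat.sub_lt_of_lt_two_mul {k n : ℕ} (h : k < 2 * n) : k - n < n := by omega

namespace Fin

variable {n : ℕ}

def firstHalf (i : Fin n) : Fin (2 * n) := ⟨i, two_mul n ▸ Nat.lt_add_right n i.isLt⟩

def secondHalf (i : Fin n) : Fin (2 * n) := ⟨n + i, two_mul n ▸ Nat.add_lt_add_left i.isLt n⟩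

theorem sum_univ_two_mul {M : Type*} [AddCommMonoid M] (f : Fin (2 * n) → M) :
    ∑ j, f j = ∑ i, f (firstHalf i) + ∑ i, f (secondHalf i) := by
  rw [← Fin.sum_congr' f (two_mul n).symm, Fin.sum_univ_add]
  rfl

theorem val_add_one_of_neZero [NeZero n] (i : Fin n) : (i + 1).val = (i.val + 1) % n := by
  rw [Fin.val_add, Fin.val_one', Nat.add_mod_mod]

theorem val_add_one_add_one_of_neZero [NeZero n] (i : Fin n) :
    (i + 1 + 1).val = (i.val + 2) % n := by
  rw [val_add_one_of_neZero, val_add_one_of_neZero, Nat.mod_add_mod]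

theorem val_secondHalf_add_one [NeZero n] (i : Fin n) :
    (secondHalf (i + 1)).val = n + (i.val + 1) % n := by
  simp [secondHalf, val_add_one_of_neZero]

end Fin

open Fin

noncomputable def circularCubic (R : Type*) [CommRing R] (n : ℕ) [NeZero n] :
    MvPolynomial (Fin (2 * n)) R :=
  ∑ i : Fin n, X (firstHalf i) * X (secondHalf i) * X (secondHalf (i + 1))

variable {R : Type*} [CommRing R] {n : ℕ}

theorem eval_circularCubic [NeZero n] (x : Fin (2 * n) → R) :
    eval x (circularCubic R n)
      = ∑ i, x (firstHalf i) * x (secondHalf i) * x (secondHalf (i + 1)) := by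
  simp [circularCubic]

theorem sum_mul_eval_pderiv_circularCubic [NeZero n] (g x : Fin (2 * n) → R) :
    ∑ j, g j * eval x (pderiv j (circularCubic R n))
      = ∑ i, (g (firstHalf i) * (x (secondHalf i) * x (secondHalf (i + 1)))
          + g (secondHalf i) * (x (firstHalf i) * x (secondHalf (i + 1)))
          + g (secondHalf (i + 1)) * (x (firstHalf i) * x (secondHalf i))) := by
  simp only [circularCubic, map_sum, Finset.mul_sum]
  rw [Finset.sum_comm]
  simp only [sum_mul_eval_pderiv_X_mul_X_mul_X]

def circularSymmetryMatrix (n : ℕ) (t0 : R) (t c : Fin n → R) :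
    Matrix (Fin (2 * n)) (Fin (2 * n)) R := fun i j =>
  if h1 : i.val < n then
    if j.val < n then
      (if i = j then t0 - t ⟨i.val, h1⟩ - t ⟨(i.val + 1) % n, Nat.mod_lt _ (Nat.zero_lt_of_lt h1)⟩
       else 0)
    else
      (if i.val = (j.val - n + 1) % n then c ⟨j.val - n, Nat.sub_lt_of_lt_two_mul j.isLt⟩ else 0)
      + (if j.val - n = (i.val + 2) % n then -c ⟨i.val, h1⟩ else 0)
  else if i = j then t ⟨i.val - n, Nat.sub_lt_of_lt_two_mul i.isLt⟩ else 0

section Entries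

variable (t0 : R) (t c : Fin n → R) (i j : Fin n)

theorem circularSymmetryMatrix_firstHalf_firstHalf [NeZero n] :
    circularSymmetryMatrix n t0 t c (firstHalf i) (firstHalf j)
      = if i = j then t0 - t i - t (i + 1) else 0 := by
  have hsucc : (⟨(i.val + 1) % n, Nat.mod_lt _ (NeZero.pos n)⟩ : Fin n) = i + 1 :=
    Fin.ext (val_add_one_of_neZero i).symm
  simp [circularSymmetryMatrix, firstHalf, Fin.ext_iff, hsucc]

theorem circularSymmetryMatrix_firstHalf_secondHalf [NeZero n] :
    circularSymmetryMatrix n t0 t c (firstHalf i) (secondHalf j)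
      = (if i = j + 1 then c j else 0) - (if j = i + 1 + 1 then c i else 0) := by
  have hsucc : i = j + 1 ↔ i.val = (j.val + 1) % n := by rw [Fin.ext_iff, val_add_one_of_neZero]
  have hsucc2 : j = i + 1 + 1 ↔ j.val = (i.val + 2) % n := by
    rw [Fin.ext_iff, val_add_one_add_one_of_neZero]
  simp [circularSymmetryMatrix, firstHalf, secondHalf, hsucc, hsucc2, sub_eq_add_neg, neg_ite]

theorem circularSymmetryMatrix_secondHalf_firstHalf :
    circularSymmetryMatrix n t0 t c (secondHalf i) (firstHalf j) = 0 := by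
  have hne : n + i.val ≠ j.val := by omega
  simp [circularSymmetryMatrix, secondHalf, firstHalf, Fin.ext_iff, hne]

theorem circularSymmetryMatrix_secondHalf_secondHalf :
    circularSymmetryMatrix n t0 t c (secondHalf i) (secondHalf j) = if i = j then t i else 0 := by
  simp [circularSymmetryMatrix, secondHalf, Fin.ext_iff]

variable (x : Fin (2 * n) → R)

theorem circularSymmetryMatrix_mulVec_firstHalf [NeZero n] :
    (circularSymmetryMatrix n t0 t c).mulVec x (firstHalf i)
      = (t0 - t i - t (i + 1)) * x (firstHalf i) + c (i - 1) * x (secondHalf (i - 1))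
        - c i * x (secondHalf (i + 1 + 1)) := by
  have hpred : ∀ j : Fin n, i = j + 1 ↔ j = i - 1 := fun j => by rw [eq_sub_iff_add_eq, eq_comm]
  simp only [Matrix.mulVec, dotProduct, sum_univ_two_mul,
    circularSymmetryMatrix_firstHalf_firstHalf, circularSymmetryMatrix_firstHalf_secondHalf, hpred,
    ite_mul, sub_mul, zero_mul, Finset.sum_sub_distrib, Finset.sum_ite_eq, Finset.sum_ite_eq',
    Finset.mem_univ, if_true]
  ring

theorem circularSymmetryMatrix_mulVec_secondHalf :
    (circularSymmetryMatrix n t0 t c).mulVec x (secondHalf i) = t i * x (secondHalf i) := by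
  simp [Matrix.mulVec, dotProduct, sum_univ_two_mul, circularSymmetryMatrix_secondHalf_firstHalf,
    circularSymmetryMatrix_secondHalf_secondHalf]

end Entries

/-- Circular case: for `p(x) = Σ_{i=1}^n x_i x_{n+i} x_{n+φ_n(i+1)}` on `ℂ^{2n}`
(0-indexed below), the block matrix `M = [[D₁, X],[0, D₂]]` with
`D₁ = diag(t₀ - t_i - t_{φ_n(i+1)})`, `D₂ = diag(t_i)` and
`X = Σ_i X_{i+1,i}(E_{φ_n(i+1),i} - E_{i,φ_n(i+2)})` satisfies
`⟨Mx, ∇p(x)⟩ = t₀ · p(x)` for all `x`. -/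
theorem stmt_14 (n : ℕ) (hn : 3 ≤ n) (t0 : ℂ) (t c : Fin n → ℂ)
    (M : Matrix (Fin (2*n)) (Fin (2*n)) ℂ)
    (hM : ∀ i j : Fin (2*n), M i j =
      if h1 : i.val < n then
        if j.val < n then
          (if i = j then t0 - t ⟨i.val, h1⟩ - t ⟨(i.val + 1) % n, Nat.mod_lt _ (by omega)⟩
           else 0)
        else
          (if i.val = (j.val - n + 1) % n then c ⟨j.val - n, by have := j.isLt; omega⟩ else 0)
          + (if j.val - n = (i.val + 2) % n then -c ⟨i.val, h1⟩ else 0)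
      else if i = j then t ⟨i.val - n, by have := i.isLt; omega⟩ else 0)
    (P : MvPolynomial (Fin (2*n)) ℂ)
    (hP : P = ∑ i : Fin n,
        X (⟨i.val, by have := i.isLt; omega⟩ : Fin (2*n)) *
        X (⟨n + i.val, by have := i.isLt; omega⟩ : Fin (2*n)) *
        X (⟨n + (i.val + 1) % n,
            by have : (i.val + 1) % n < n := Nat.mod_lt _ (by omega); omega⟩ : Fin (2*n))) :
    ∀ x : Fin (2*n) → ℂ,
      ∑ j : Fin (2*n), M.mulVec x j * MvPolynomial.eval x (MvPolynomial.pderiv j P)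
        = t0 * MvPolynomial.eval x P := by
  have : NeZero n := ⟨by omega⟩
  intro x
  have hM' : M = circularSymmetryMatrix n t0 t c := Matrix.ext hM
  have hP' : P = circularCubic ℂ n :=
    hP.trans <| Finset.sum_congr rfl fun i _ => congrArg (X (firstHalf i) * X (secondHalf i) * X ·)
      (Fin.ext (val_secondHalf_add_one i).symm)
  subst hM' hP'
  rw [sum_mul_eval_pderiv_circularCubic, eval_circularCubic]
  simp only [circularSymmetryMatrix_mulVec_firstHalf, circularSymmetryMatrix_mulVec_secondHalf]
  exact sum_circular_relative_invariance 1 t0 t c (fun i => x (firstHalf i))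
    (fun i => x (secondHalf i))
end

section
/- Let d ≥ 3 and suppose p(x_1,...,x_n) and q(y_1,...,y_m) are homogeneous polynomials of degree d. If there exists a polynomial R(x,y) ∈ C[x,y] with R(∇_x p(x), ∇_y q(y)) = (p(x)+q(y))^{d-1} for all x, y, and if P_* := (p_*^{1/(d-1)} + q_*^{1/(d-1)})^{d-1} satisfies P_*(∇p, ∇q) = (p+q)^{d-1} with p_*, q_* dual polynomials of p, q, then on the (Zariski-dense) image of the gradient maps, R agrees with the non-polynomial function P_*; hence if p_*^{1/(d-1)} + q_*^{1/(d-1)} raised to the (d-1)-st power is not a polynomial in x, y, no such polynomial R exists. In particular, for p(x) = x_1x_2x_3 (d = 3, p_* proportional to x_1x_2x_3) and q(y) = y_1y_2y_3, the function (√(x_1x_2x_3) + √(y_1y_2y_3))^2 is not a polynomial, so P(x,y) = x_1x_2x_3 + y_1y_2y_3 admits no dual polynomial, i.e., P is not homaloidal via a polynomial dual. -/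
/-! The gradient of a cubic form is even, so `R(∇p(x), ∇q(y))` is unchanged under `x ↦ -x`,
whereas `(p(x) + q(y))²` is `4` at `x = y = 1` and `0` at `x = -1, y = 1`. -/

lemma gradient_products_neg_left (x y : Fin 3 → ℂ) :
    ![(-x) 1 * (-x) 2, (-x) 0 * (-x) 2, (-x) 0 * (-x) 1, y 1 * y 2, y 0 * y 2, y 0 * y 1] =
      ![x 1 * x 2, x 0 * x 2, x 0 * x 1, y 1 * y 2, y 0 * y 2, y 0 * y 1] := by
  simp only [Pi.neg_apply, neg_mul_neg]

/-- `P(x,y) = x₁x₂x₃ + y₁y₂y₃` admits no polynomial dual: there is no polynomial `R`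
in 6 variables with `R(x₂x₃, x₁x₃, x₁x₂, y₂y₃, y₁y₃, y₁y₂) = (x₁x₂x₃ + y₁y₂y₃)²`. -/
theorem stmt_19 :
    ¬ ∃ R : MvPolynomial (Fin 6) ℂ,
      ∀ x y : Fin 3 → ℂ,
        MvPolynomial.eval
          (![x 1 * x 2, x 0 * x 2, x 0 * x 1, y 1 * y 2, y 0 * y 2, y 0 * y 1]) R
        = (x 0 * x 1 * x 2 + y 0 * y 1 * y 2)^2 := by
  rintro ⟨R, hR⟩
  have h := hR (-1) 1
  rw [gradient_products_neg_left, hR 1 1] at h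
  norm_num at h
end
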